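/- arXiv:physics/9710022 — 2 statements merged into one kernel-verified Lean document; each statement's English description precedes it below -/
import Mathlib

section
/- On formal Fourier series on the circle, with δ^>(t) = (1/2π) Σ_{m>0} e^{-imt} and δ^<(t) = (1/2π) Σ_{m≤0} e^{-imt}, the identity δ^>(t)δ^<(-t) - δ^>(-t)δ^<(t) = -(1/2πi) δ'(t) holds, where δ(t) = δ^>(t) + δ^<(t) and δ'(t) is its formal derivative. -/
/- Formal distributions on the circle are represented by their coefficient sequences
`F : ℤ → ℂ` with respect to the basis `e^{-imt}`, i.e. `F(t) = Σ_m F(m) e^{-imt}`.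
Then `F(-t)` has coefficients `m ↦ F(-m)`, the product `F(t)G(t)` has coefficients
`m ↦ Σ'_k F(k)·G(m-k)`, and `d/dt` has coefficients `m ↦ (-i·m)·F(m)`. -/

/-- Positive-frequency half `δ^>(t) = (1/2π) Σ_{m>0} e^{-imt}`. -/
noncomputable def deltaGt (m : ℤ) : ℂ := if 0 < m then 1 / (2 * (Real.pi : ℂ)) else 0

/-- Non-positive-frequency half `δ^<(t) = (1/2π) Σ_{m≤0} e^{-imt}`. -/
noncomputable def deltaLt (m : ℤ) : ℂ := if m ≤ 0 then 1 / (2 * (Real.pi : ℂ)) else 0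

/-- The delta function `δ = δ^> + δ^<`, with all coefficients `1/2π`. -/
noncomputable def deltaFn (_ : ℤ) : ℂ := 1 / (2 * (Real.pi : ℂ))

/-- Formal derivative `d/dt`: in the basis `e^{-imt}` it multiplies the `m`-th
coefficient by `-i·m`. -/
noncomputable def fder (F : ℤ → ℂ) (m : ℤ) : ℂ := (-Complex.I * (m : ℂ)) * F m

/-- Lemma 5.1 i:
`δ^>(t) δ^<(-t) - δ^>(-t) δ^<(t) = -(1/2πi) δ'(t)` as formal distributions,
i.e. equality of every Fourier coefficient. -/
theorem delta_halves_identity_i (m : ℤ) :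
    (∑' k : ℤ, deltaGt k * deltaLt (-(m - k)))
      - (∑' k : ℤ, deltaGt (-k) * deltaLt (m - k))
      = -(1 / (2 * (Real.pi : ℂ) * Complex.I)) * fder deltaFn m := by
  set c : ℂ := 1 / (2 * (Real.pi : ℂ)) with hc
  have v1 : ∀ k ∉ Finset.Ioc 0 m, deltaGt k * deltaLt (-(m - k)) = 0 := by
    intro k hk
    simp only [Finset.mem_Ioc, not_and_or, not_lt, not_le] at hk
    rcases hk with h | h
    · rw [deltaGt, if_neg (not_lt.mpr h), zero_mul]
    · rw [deltaLt, if_neg (by omega : ¬ -(m - k) ≤ 0), mul_zero]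
  have v2 : ∀ k ∉ Finset.Ico m 0, deltaGt (-k) * deltaLt (m - k) = 0 := by
    intro k hk
    simp only [Finset.mem_Ico, not_and_or, not_lt, not_le] at hk
    rcases hk with h | h
    · rw [deltaLt, if_neg (by omega : ¬ m - k ≤ 0), mul_zero]
    · rw [deltaGt, if_neg (by omega : ¬ (0:ℤ) < -k), zero_mul]
  have e1 : ∀ k ∈ Finset.Ioc 0 m, deltaGt k * deltaLt (-(m - k)) = c * c := by
    intro k hk
    simp only [Finset.mem_Ioc] at hk
    simp only [deltaGt, deltaLt]
    rw [if_pos hk.1, if_pos (by omega : -(m - k) ≤ 0), hc]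
  have e2 : ∀ k ∈ Finset.Ico m 0, deltaGt (-k) * deltaLt (m - k) = c * c := by
    intro k hk
    simp only [Finset.mem_Ico] at hk
    simp only [deltaGt, deltaLt]
    rw [if_pos (by omega : (0:ℤ) < -k), if_pos (by omega : m - k ≤ 0), hc]
  rw [tsum_eq_sum v1, tsum_eq_sum v2, Finset.sum_congr rfl e1, Finset.sum_congr rfl e2,
    Finset.sum_const, Finset.sum_const, Int.card_Ioc, Int.card_Ico]
  rw [sub_zero, zero_sub, nsmul_eq_mul, nsmul_eq_mul]
  have hm : ((m.toNat : ℂ)) - (((-m).toNat : ℂ)) = (m : ℂ) := by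
    have h : (m.toNat : ℤ) - ((-m).toNat : ℤ) = m := by omega
    have h2 : (((m.toNat : ℤ) - ((-m).toNat : ℤ) : ℤ) : ℂ) = (m : ℂ) := by rw [h]
    push_cast at h2
    exact h2
  rw [show (m.toNat : ℂ) * (c * c) - ((-m).toNat : ℂ) * (c * c)
      = ((m.toNat : ℂ) - ((-m).toNat : ℂ)) * (c * c) by ring, hm]
  rw [fder, deltaFn, ← hc, hc]
  have hπ : (Real.pi : ℂ) ≠ 0 := by simpa using Real.pi_ne_zero
  field_simp
end

section
/- With δ^> and δ^< as above, (d/dt)δ^>(t) (d/dt)δ^<(-t) - (d/dt)δ^>(-t) (d/dt)δ^<(t) = (1/12πi)(δ'''(t) + δ'(t)) as formal distributions. -/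
lemma gauss1 (n : ℕ) : ∑ j ∈ Finset.range n, ((j : ℂ) + 1) = (n : ℂ) * ((n : ℂ) + 1) / 2 := by
  induction n with
  | zero => simp
  | succ k ih => rw [Finset.sum_range_succ, ih]; push_cast; ring

lemma gauss2 (n : ℕ) : ∑ j ∈ Finset.range n, ((j : ℂ) + 1) ^ 2
    = (n : ℂ) * ((n : ℂ) + 1) * (2 * (n : ℂ) + 1) / 6 := by
  induction n with
  | zero => simp
  | succ k ih => rw [Finset.sum_range_succ, ih]; push_cast; ring

lemma gaussMain (n : ℕ) : ∑ j ∈ Finset.range n, (((j : ℂ) + 1) * ((n : ℂ) - (j : ℂ) - 1))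
    = ((n : ℂ) ^ 3 - n) / 6 := by
  have h : ∀ j ∈ Finset.range n, ((j : ℂ) + 1) * ((n : ℂ) - (j : ℂ) - 1)
      = (n : ℂ) * ((j : ℂ) + 1) - ((j : ℂ) + 1) ^ 2 := fun j _ => by ring
  rw [Finset.sum_congr rfl h, Finset.sum_sub_distrib, ← Finset.mul_sum, gauss1, gauss2]
  ring

/-- Lemma 5.1 iii:
`(d/dt)δ^>(t) (d/dt)δ^<(-t) - (d/dt)δ^>(-t) (d/dt)δ^<(t) = (1/12πi)(δ'''(t) + δ'(t))`
as formal distributions, i.e. equality of every Fourier coefficient. -/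
theorem delta_halves_identity_iii (m : ℤ) :
    (∑' k : ℤ, fder deltaGt k * fder deltaLt (-(m - k)))
      - (∑' k : ℤ, fder deltaGt (-k) * fder deltaLt (m - k))
      = (1 / (12 * (Real.pi : ℂ) * Complex.I))
          * (fder (fder (fder deltaFn)) m + fder deltaFn m) := by
  have hπ : (Real.pi : ℂ) ≠ 0 := by exact_mod_cast Real.pi_ne_zero
  have hI : Complex.I * Complex.I = -1 := Complex.I_mul_I
  obtain ⟨n, hn | hn⟩ := Int.eq_nat_or_neg m
  · subst hn
    -- second tsum is zero
    have h2 : (∑' k : ℤ, fder deltaGt (-k) * fder deltaLt ((n : ℤ) - k)) = 0 := by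
      have hz : ∀ k : ℤ, fder deltaGt (-k) * fder deltaLt ((n : ℤ) - k) = 0 := by
        intro k
        by_cases h : 0 < -k
        · have h' : ¬ ((n : ℤ) - k ≤ 0) := by omega
          have : deltaLt ((n : ℤ) - k) = 0 := if_neg h'
          simp only [fder]
          rw [this]
          ring
        · have : deltaGt (-k) = 0 := if_neg h
          simp only [fder]
          rw [this]
          ring
      exact (tsum_congr hz).trans tsum_zero
    -- first tsum
    have hinj : Set.InjOn (fun j : ℕ => (j : ℤ) + 1) (Finset.range n) := by
      intro a _ b _ h
      simp only at h
      omega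
    have h1 : (∑' k : ℤ, fder deltaGt k * fder deltaLt (-((n : ℤ) - k)))
        = ∑ b ∈ Finset.image (fun j : ℕ => (j : ℤ) + 1) (Finset.range n),
            fder deltaGt b * fder deltaLt (-((n : ℤ) - b)) := by
      apply tsum_eq_sum
      intro b hb
      by_cases hb1 : 0 < b
      · by_cases hb2 : -(((n : ℤ)) - b) ≤ 0
        · exfalso
          apply hb
          simp only [Finset.mem_image, Finset.mem_range]
          exact ⟨(b - 1).toNat, by omega, by omega⟩
        · have : deltaLt (-((n : ℤ) - b)) = 0 := if_neg hb2
          simp only [fder]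
          rw [this]
          ring
      · have : deltaGt b = 0 := if_neg hb1
        simp only [fder]
        rw [this]
        ring
    rw [h1, h2, Finset.sum_image hinj]
    have hsum : ∑ j ∈ Finset.range n,
        fder deltaGt ((j : ℤ) + 1) * fder deltaLt (-((n : ℤ) - ((j : ℤ) + 1)))
        = ∑ j ∈ Finset.range n,
            (((j : ℂ) + 1) * ((n : ℂ) - (j : ℂ) - 1)) * (1 / (2 * (Real.pi : ℂ))) ^ 2 := by
      apply Finset.sum_congr rfl
      intro j hj
      have hj' : (j : ℤ) < n := by exact_mod_cast Finset.mem_range.mp hj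
      have ha : (0 : ℤ) < (j : ℤ) + 1 := by omega
      have hb : -(((n : ℤ)) - ((j : ℤ) + 1)) ≤ 0 := by omega
      simp only [fder, deltaGt, deltaLt, if_pos ha, if_pos hb]
      push_cast
      linear_combination (-(((j : ℂ) + 1) * ((n : ℂ) - (j : ℂ) - 1))
        * (1 / (2 * (Real.pi : ℂ))) ^ 2) * hI
    rw [hsum, ← Finset.sum_mul, gaussMain]
    simp only [fder, deltaFn]
    field_simp
    ring_nf
    linear_combination (12 * (n : ℂ) ^ 3) * hI
  · subst hn
    -- first tsum is zero
    have h1 : (∑' k : ℤ, fder deltaGt k * fder deltaLt (-((-(n : ℤ)) - k))) = 0 := by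
      have hz : ∀ k : ℤ, fder deltaGt k * fder deltaLt (-((-(n : ℤ)) - k)) = 0 := by
        intro k
        by_cases h : 0 < k
        · have h' : ¬ (-((-(n : ℤ)) - k) ≤ 0) := by omega
          have : deltaLt (-((-(n : ℤ)) - k)) = 0 := if_neg h'
          simp only [fder]
          rw [this]
          ring
        · have : deltaGt k = 0 := if_neg h
          simp only [fder]
          rw [this]
          ring
      exact (tsum_congr hz).trans tsum_zero
    have hinj : Set.InjOn (fun j : ℕ => -((j : ℤ) + 1)) (Finset.range n) := by
      intro a _ b _ h
      simp only at h
      omega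
    have h2 : (∑' k : ℤ, fder deltaGt (-k) * fder deltaLt ((-(n : ℤ)) - k))
        = ∑ b ∈ Finset.image (fun j : ℕ => -((j : ℤ) + 1)) (Finset.range n),
            fder deltaGt (-b) * fder deltaLt ((-(n : ℤ)) - b) := by
      apply tsum_eq_sum
      intro b hb
      by_cases hb1 : 0 < -b
      · by_cases hb2 : (-(n : ℤ)) - b ≤ 0
        · exfalso
          apply hb
          simp only [Finset.mem_image, Finset.mem_range]
          exact ⟨(-b - 1).toNat, by omega, by omega⟩
        · have : deltaLt ((-(n : ℤ)) - b) = 0 := if_neg hb2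
          simp only [fder]
          rw [this]
          ring
      · have : deltaGt (-b) = 0 := if_neg hb1
        simp only [fder]
        rw [this]
        ring
    rw [h1, h2, Finset.sum_image hinj]
    have hsum : ∑ j ∈ Finset.range n,
        fder deltaGt (-(-((j : ℤ) + 1))) * fder deltaLt ((-(n : ℤ)) - (-((j : ℤ) + 1)))
        = ∑ j ∈ Finset.range n,
            (((j : ℂ) + 1) * ((n : ℂ) - (j : ℂ) - 1)) * (1 / (2 * (Real.pi : ℂ))) ^ 2 := by
      apply Finset.sum_congr rfl
      intro j hj
      have hj' : (j : ℤ) < n := by exact_mod_cast Finset.mem_range.mp hj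
      have ha : (0 : ℤ) < -(-((j : ℤ) + 1)) := by omega
      have hb : (-(n : ℤ)) - (-((j : ℤ) + 1)) ≤ 0 := by omega
      simp only [fder, deltaGt, deltaLt, if_pos ha, if_pos hb]
      push_cast
      linear_combination (-(((j : ℂ) + 1) * ((n : ℂ) - (j : ℂ) - 1))
        * (1 / (2 * (Real.pi : ℂ))) ^ 2) * hI
    rw [hsum, ← Finset.sum_mul, gaussMain]
    simp only [fder, deltaFn]
    field_simp
    ring_nf
    push_cast
    linear_combination (-12 * (n : ℂ) ^ 3) * hI
end
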